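/- Let α > 0 and let g : (0,1] → ℝ be nonnegative, measurable, and integrable on (0,1]. Then ∫₀¹ α·x^(α−1)·(∫_x^1 y^(−α)·g(y) dy) dx = ∫₀¹ g(y) dy. -/

import Mathlib

open MeasureTheory Real Set
open scoped ENNReal

/-!
Tonelli on the triangle `0 < x < y ≤ 1` turns the left-hand side into
`∫₀¹ (∫₀^y α x^(α-1) dx) y^(-α) g(y) dy`, and the inner integral is `y^α`. Working with
`ℝ≥0∞`-valued integrals makes the exchange unconditional.
-/

theorem lintegral_Ioc_lintegral_Ioc_swap {a b : ℝ} {F : ℝ → ℝ → ℝ≥0∞}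
    (hF : AEMeasurable (Function.uncurry F)
      ((volume.restrict (Ioc a b)).prod (volume.restrict (Ioc a b)))) :
    ∫⁻ x in Ioc a b, ∫⁻ y in Ioc x b, F x y = ∫⁻ y in Ioc a b, ∫⁻ x in Ioo a y, F x y := by
  let T : Set (ℝ × ℝ) := {p | p.1 < p.2}
  have hT : MeasurableSet T := measurableSet_lt measurable_fst measurable_snd
  calc ∫⁻ x in Ioc a b, ∫⁻ y in Ioc x b, F x y
      = ∫⁻ x in Ioc a b, ∫⁻ y in Ioc a b, T.indicator (Function.uncurry F) (x, y) := by
        refine setLIntegral_congr_fun measurableSet_Ioc fun x hx => ?_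
        change _ = ∫⁻ y in Ioc a b, (Ioi x).indicator (F x) y
        rw [lintegral_indicator measurableSet_Ioi, Measure.restrict_restrict measurableSet_Ioi,
          inter_comm, Ioc_inter_Ioi, sup_eq_right.mpr hx.1.le]
    _ = ∫⁻ y in Ioc a b, ∫⁻ x in Ioc a b, T.indicator (Function.uncurry F) (x, y) :=
        lintegral_lintegral_swap (hF.indicator hT)
    _ = ∫⁻ y in Ioc a b, ∫⁻ x in Ioo a y, F x y := by
        refine setLIntegral_congr_fun measurableSet_Ioc fun y hy => ?_
        change ∫⁻ x in Ioc a b, (Iio y).indicator (fun x => F x y) x = _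
        have hIoo : Ioc a b ∩ Iio y = Ioo a y :=
          ext fun z => ⟨fun ⟨⟨haz, _⟩, hzy⟩ => ⟨haz, hzy⟩,
            fun ⟨haz, hzy⟩ => ⟨⟨haz, hzy.le.trans hy.2⟩, hzy⟩⟩
        rw [lintegral_indicator measurableSet_Iio, Measure.restrict_restrict measurableSet_Iio,
          inter_comm, hIoo]

theorem lintegral_Ioo_zero_ofReal_mul_rpow_sub_one {α y : ℝ} (hα : 0 < α) (hy : 0 ≤ y) :
    ∫⁻ x in Ioo 0 y, ENNReal.ofReal (α * x ^ (α - 1)) = ENNReal.ofReal (y ^ α) := by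
  have hint : IntegrableOn (fun x : ℝ => α * x ^ (α - 1)) (Ioc 0 y) :=
    ((intervalIntegrable_iff_integrableOn_Ioc_of_le hy).mp
      (intervalIntegral.intervalIntegrable_rpow' (by linarith))).const_mul α
  have hval : ∫ x in Ioc 0 y, α * x ^ (α - 1) = y ^ α := by
    rw [← intervalIntegral.integral_of_le hy, intervalIntegral.integral_const_mul,
      integral_rpow (Or.inl (by linarith)), sub_add_cancel, zero_rpow hα.ne', sub_zero]
    field_simp
  rw [setLIntegral_congr Ioo_ae_eq_Ioc, ← hval]
  refine (ofReal_integral_eq_lintegral_ofReal hint ?_).symm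
  filter_upwards [self_mem_ae_restrict measurableSet_Ioc] with x hx
  exact mul_nonneg hα.le (rpow_nonneg hx.1.le _)

noncomputable def alphaLEstimate (α : ℝ) (f : ℝ → ℝ≥0∞) (x : ℝ) : ℝ≥0∞ :=
  ENNReal.ofReal (α * x ^ (α - 1)) * ∫⁻ y in Ioc x 1, ENNReal.ofReal (y ^ (-α)) * f y

theorem measurable_alphaLEstimate (α : ℝ) (f : ℝ → ℝ≥0∞) :
    Measurable (alphaLEstimate α f) := by
  have hanti : Antitone fun x : ℝ => ∫⁻ y in Ioc x 1, ENNReal.ofReal (y ^ (-α)) * f y :=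
    fun _ _ hxx' => lintegral_mono_set (Ioc_subset_Ioc_left hxx')
  exact (by fun_prop : Measurable fun x : ℝ => ENNReal.ofReal (α * x ^ (α - 1))).mul
    hanti.measurable

theorem lintegral_alphaLEstimate {α : ℝ} (hα : 0 < α) {f : ℝ → ℝ≥0∞}
    (hf : AEMeasurable f (volume.restrict (Ioc 0 1))) :
    ∫⁻ x in Ioc 0 1, alphaLEstimate α f x = ∫⁻ y in Ioc 0 1, f y := by
  calc ∫⁻ x in Ioc 0 1, alphaLEstimate α f x
      = ∫⁻ x in Ioc 0 1, ∫⁻ y in Ioc x 1,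
          ENNReal.ofReal (α * x ^ (α - 1)) * (ENNReal.ofReal (y ^ (-α)) * f y) := by
        simp only [alphaLEstimate, lintegral_const_mul' _ _ ENNReal.ofReal_ne_top]
    _ = ∫⁻ y in Ioc 0 1, ∫⁻ x in Ioo 0 y,
          ENNReal.ofReal (α * x ^ (α - 1)) * (ENNReal.ofReal (y ^ (-α)) * f y) :=
        lintegral_Ioc_lintegral_Ioc_swap <| by
          have := hf.comp_snd (μ := volume.restrict (Ioc (0 : ℝ) 1))
          fun_prop
    _ = ∫⁻ y in Ioc 0 1, ENNReal.ofReal (y ^ α) * (ENNReal.ofReal (y ^ (-α)) * f y) := by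
        refine setLIntegral_congr_fun measurableSet_Ioc fun y hy => ?_
        rw [lintegral_mul_const _ (by fun_prop),
          lintegral_Ioo_zero_ofReal_mul_rpow_sub_one hα hy.1.le]
    _ = ∫⁻ y in Ioc 0 1, f y := by
        refine setLIntegral_congr_fun measurableSet_Ioc fun y hy => ?_
        rw [← mul_assoc, ← ENNReal.ofReal_mul (rpow_nonneg hy.1.le _), ← rpow_add hy.1,
          add_neg_cancel, rpow_zero, ENNReal.ofReal_one, one_mul]

theorem alphaLEstimate_ofReal_toReal {α x : ℝ} (hα : 0 ≤ α) (hx : x ∈ Ioc 0 1) {g : ℝ → ℝ}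
    (hg_nonneg : ∀ y ∈ Ioc x 1, 0 ≤ g y)
    (hg : AEStronglyMeasurable g (volume.restrict (Ioc x 1))) :
    (alphaLEstimate α (fun y => ENNReal.ofReal (g y)) x).toReal
      = α * x ^ (α - 1) * ∫ y in x..1, y ^ (-α) * g y := by
  -- If the inner integral diverges, both sides are junk `0`s.
  have hpos : ∀ y ∈ Ioc x 1, 0 ≤ y ^ (-α) := fun y hy => rpow_nonneg (hx.1.trans hy.1).le _
  rw [alphaLEstimate, ENNReal.toReal_mul, ENNReal.toReal_ofReal (by have := hx.1; positivity),
    intervalIntegral.integral_of_le hx.2, integral_eq_lintegral_of_nonneg_ae]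
  · congr 2
    refine setLIntegral_congr_fun measurableSet_Ioc fun y hy => ?_
    rw [ENNReal.ofReal_mul (hpos y hy)]
  · filter_upwards [self_mem_ae_restrict measurableSet_Ioc] with y hy
    exact mul_nonneg (hpos y hy) (hg_nonneg y hy)
  · exact (by fun_prop : Measurable fun y : ℝ => y ^ (-α)).aestronglyMeasurable.mul hg

theorem alphaL_unbiased_general
    (g : ℝ → ℝ) (α : ℝ) (hα : 0 < α)
    (hg_nonneg : ∀ x ∈ Set.Ioc (0 : ℝ) 1, 0 ≤ g x)
    (hg_int : IntegrableOn g (Set.Ioc (0 : ℝ) 1)) :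
    ∫ x in Set.Ioc (0 : ℝ) 1, α * x ^ (α - 1) * (∫ y in x..1, y ^ (-α) * g y)
      = ∫ y in Set.Ioc (0 : ℝ) 1, g y := by
  set f : ℝ → ℝ≥0∞ := fun y => ENNReal.ofReal (g y)
  have hf : ∫⁻ x in Ioc 0 1, alphaLEstimate α f x = ∫⁻ y in Ioc 0 1, f y :=
    lintegral_alphaLEstimate hα hg_int.aemeasurable.ennreal_ofReal
  have hmeas := (measurable_alphaLEstimate α f).aemeasurable (μ := volume.restrict (Ioc 0 1))
  have hfin : ∀ᵐ x ∂volume.restrict (Ioc 0 1), alphaLEstimate α f x < ∞ :=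
    ae_lt_top' hmeas (hf ▸ hg_int.lintegral_lt_top.ne)
  calc ∫ x in Ioc 0 1, α * x ^ (α - 1) * (∫ y in x..1, y ^ (-α) * g y)
      = ∫ x in Ioc 0 1, (alphaLEstimate α f x).toReal := by
        refine setIntegral_congr_fun measurableSet_Ioc fun x hx => ?_
        exact (alphaLEstimate_ofReal_toReal hα.le hx
          (fun y hy => hg_nonneg y ⟨hx.1.trans hy.1, hy.2⟩)
          (hg_int.mono_set (Ioc_subset_Ioc_left hx.1.le)).1).symm
    _ = (∫⁻ y in Ioc 0 1, f y).toReal := by rw [integral_toReal hmeas hfin, hf]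
    _ = ∫ y in Ioc 0 1, g y :=
        (integral_eq_lintegral_of_nonneg_ae
          ((ae_restrict_iff' measurableSet_Ioc).mpr (.of_forall hg_nonneg)) hg_int.1).symm

/-- unbiasedness: For `α > 0` and nonnegative measurable `g` integrable on
`(0,1]`, `∫₀¹ α x^(α-1) (∫_x^1 y^(-α) g(y) dy) dx = ∫₀¹ g(y) dy`. -/
theorem alphaL_unbiased
    (g : ℝ → ℝ) (α : ℝ) (hα : 0 < α)
    (hg_nonneg : ∀ x ∈ Set.Ioc (0 : ℝ) 1, 0 ≤ g x)
    (hg_meas : Measurable g)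
    (hg_int : IntegrableOn g (Set.Ioc (0 : ℝ) 1)) :
    ∫ x in Set.Ioc (0 : ℝ) 1, α * x ^ (α - 1) * (∫ y in x..1, y ^ (-α) * g y)
      = ∫ y in Set.Ioc (0 : ℝ) 1, g y :=
  alphaL_unbiased_general g α hα hg_nonneg hg_int
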